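/- Let v₁, v₂, v₃ ∈ ℝ³ be linearly independent vectors of the form v_i = (x_i, y_i, 1), and let ṽ₁, ṽ₂, ṽ₃ ∈ ℝ³ be linearly independent vectors of the form ṽ_i = (x̃_i, ỹ_i, 1). Let ℓ_{ij} = √((x_i−x_j)²+(y_i−y_j)²) and ℓ̃_{ij} = √((x̃_i−x̃_j)²+(ỹ_i−ỹ_j)²). Let a, b, c ∈ ℝ be such that the quadratic form q(x,y,z) = x²+y²+2axz+2byz+cz² vanishes at v₁, v₂, v₃, and let ã, b̃, c̃ ∈ ℝ be such that q̃(x,y,z) = x²+y²+2ãxz+2b̃yz+c̃z² vanishes at ṽ₁, ṽ₂, ṽ₃. Let F : ℝ³ → ℝ³ be a linear map with F(v_i) = μ_i ṽ_i for some μ_i ≠ 0, i = 1,2,3. Then the following are equivalent: (i) there exists c₀ ≠ 0 such that q̃(F(v)) = c₀·q(v) for all v ∈ ℝ³ (i.e., the induced projective map takes the circumcircle of the first triangle to the circumcircle of the second); (ii) there exists μ ≠ 0 with μ₁ = μ·e^{−u₁}, μ₂ = μ·e^{−u₂}, μ₃ = μ·e^{−u₃}, where e^{u₁} = (ℓ̃₁₂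 ℓ₂₃ ℓ̃₃₁)/(ℓ₁₂ ℓ̃₂₃ ℓ₃₁) and cyclically for u₂, u₃. -/

import Mathlib

/-!
Write `w = ∑ tᵢ vᵢ`. Since `q` vanishes at the `vᵢ`, `q w = -∑_{i<j} tᵢ tⱼ ℓᵢⱼ²`, and likewise
`q̃ (F w) = -∑_{i<j} tᵢ tⱼ μᵢ μⱼ ℓ̃ᵢⱼ²`. So `q̃ ∘ F = c₀ q` says exactly that
`μᵢ μⱼ ℓ̃ᵢⱼ² = c₀ ℓᵢⱼ²` for each pair. As `ℓ̃ᵢⱼ² = e^{uᵢ + uⱼ} ℓᵢⱼ²`, this means that all products of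
two distinct `μᵢ e^{uᵢ}` equal `c₀ ≠ 0`, i.e. that `μᵢ e^{uᵢ} = m` for one `m ≠ 0` (and `c₀ = m²`).
-/

def circleForm (a b c : ℝ) (w : Fin 3 → ℝ) : ℝ :=
  w 0 ^ 2 + w 1 ^ 2 + 2 * a * w 0 * w 2 + 2 * b * w 1 * w 2 + c * w 2 ^ 2

def sqDist {ι : Type*} (x y : ι → ℝ) (i j : ι) : ℝ := (x i - x j) ^ 2 + (y i - y j) ^ 2

noncomputable def scaleRatio {ι : Type*} (L l : ι → ι → ℝ) (i j k : ι) : ℝ :=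
  L i j * l j k * L k i / (l i j * L j k * l k i)

section scaleRatio

variable {ι : Type*} {L l : ι → ι → ℝ} {i j k : ι}

lemma scaleRatio_ne_zero_iff : scaleRatio L l i j k ≠ 0 ↔
    (L i j ≠ 0 ∧ l j k ≠ 0 ∧ L k i ≠ 0) ∧ (l i j ≠ 0 ∧ L j k ≠ 0 ∧ l k i ≠ 0) := by
  simp only [scaleRatio, div_ne_zero_iff, mul_ne_zero_iff, and_assoc]

lemma scaleRatio_mul_scaleRatio_mul_sq (h : scaleRatio L l i j k ≠ 0) :
    scaleRatio L l i j k * scaleRatio L l j k i * l i j ^ 2 = L i j ^ 2 := by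
  obtain ⟨⟨-, hjk, hLki⟩, hij, hLjk, hki⟩ := scaleRatio_ne_zero_iff.mp h
  unfold scaleRatio
  field_simp

end scaleRatio

/-- The points `![x i, y i, 1]` are isotropic, and the polar form of two of them is
`-sqDist x y i j / 2`, since the form takes the value `sqDist x y i j` on their difference
`![x i - x j, y i - y j, 0]`. -/
lemma circleForm_sum_smul {x y : Fin 3 → ℝ} {a b c : ℝ}
    (hq0 : ∀ i, circleForm a b c ![x i, y i, 1] = 0) (t : Fin 3 → ℝ) :
    circleForm a b c (∑ i, t i • ![x i, y i, 1]) =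
      -(t 0 * t 1 * sqDist x y 0 1 + t 1 * t 2 * sqDist x y 1 2 + t 2 * t 0 * sqDist x y 2 0) := by
  have h0 := hq0 0
  have h1 := hq0 1
  have h2 := hq0 2
  simp only [circleForm, sqDist, Fin.sum_univ_three, Pi.add_apply, Pi.smul_apply, smul_eq_mul,
    Matrix.cons_val_zero, Matrix.cons_val_one, Matrix.cons_val_two, Matrix.head_cons,
    Matrix.tail_cons, mul_one, one_pow] at h0 h1 h2 ⊢
  linear_combination (t 0 * (t 0 + t 1 + t 2)) * h0 + (t 1 * (t 0 + t 1 + t 2)) * h1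
    + (t 2 * (t 0 + t 1 + t 2)) * h2

lemma forall_pairwise_products_eq_zero_iff {R : Type*} [CommRing R] (e₀₁ e₁₂ e₂₀ : R) :
    (∀ t : Fin 3 → R, t 0 * t 1 * e₀₁ + t 1 * t 2 * e₁₂ + t 2 * t 0 * e₂₀ = 0) ↔
      e₀₁ = 0 ∧ e₁₂ = 0 ∧ e₂₀ = 0 := by
  refine ⟨fun h => ⟨?_, ?_, ?_⟩, fun ⟨h₀₁, h₁₂, h₂₀⟩ t => by simp [h₀₁, h₁₂, h₂₀]⟩
  · simpa using h ![1, 1, 0]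
  · simpa using h ![0, 1, 1]
  · simpa using h ![1, 0, 1]

lemma exists_pairwise_products_eq_iff {R : Type*} [CommRing R] [IsDomain R] (p : Fin 3 → R) :
    (∃ c ≠ 0, p 0 * p 1 = c ∧ p 1 * p 2 = c ∧ p 2 * p 0 = c) ↔ ∃ m ≠ 0, ∀ i, p i = m := by
  constructor
  · rintro ⟨c, hc, h₀₁, h₁₂, h₂₀⟩
    obtain ⟨hp0, hp1⟩ := mul_ne_zero_iff.mp (h₀₁ ▸ hc)
    have hp2 := (mul_ne_zero_iff.mp (h₁₂ ▸ hc)).2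
    refine ⟨p 0, hp0, ?_⟩
    have e1 : p 1 = p 0 := mul_right_cancel₀ hp2 (by linear_combination h₁₂ - h₂₀)
    have e2 : p 2 = p 0 := mul_right_cancel₀ hp1 (by linear_combination h₁₂ - h₀₁)
    intro i; fin_cases i <;> simp [e1, e2]
  · rintro ⟨m, hm, hp⟩
    exact ⟨m * m, mul_ne_zero hm hm, by simp [hp]⟩

lemma mul_mul_eq_mul_iff_of_mul_mul_eq {R : Type*} [CommRing R] [IsDomain R] {D D' s t μ ν c : R}
    (hD : D ≠ 0) (hD' : s * t * D = D') :
    μ * ν * D' = c * D ↔ μ * s * (ν * t) = c := by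
  rw [← hD', show μ * ν * (s * t * D) = μ * s * (ν * t) * D by ring]
  exact mul_left_inj' hD

lemma forall_circleForm_map_eq_iff {x y xt yt : Fin 3 → ℝ} {a b c a' b' c' : ℝ}
    (hli : LinearIndependent ℝ fun i => ![x i, y i, 1])
    (hq0 : ∀ i, circleForm a b c ![x i, y i, 1] = 0)
    (hqt0 : ∀ i, circleForm a' b' c' ![xt i, yt i, 1] = 0)
    {F : (Fin 3 → ℝ) →ₗ[ℝ] (Fin 3 → ℝ)} {μ : Fin 3 → ℝ}
    (hF : ∀ i, F ![x i, y i, 1] = μ i • ![xt i, yt i, 1]) (c₀ : ℝ) :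
    (∀ w, circleForm a' b' c' (F w) = c₀ * circleForm a b c w) ↔
      μ 0 * μ 1 * sqDist xt yt 0 1 = c₀ * sqDist x y 0 1 ∧
      μ 1 * μ 2 * sqDist xt yt 1 2 = c₀ * sqDist x y 1 2 ∧
      μ 2 * μ 0 * sqDist xt yt 2 0 = c₀ * sqDist x y 2 0 := by
  have hsurj : Function.Surjective fun t : Fin 3 → ℝ => ∑ i, t i • ![x i, y i, 1] := by
    intro w
    rw [← Submodule.mem_span_range_iff_exists_fun,
      hli.span_eq_top_of_card_eq_finrank (by simp)]
    exact Submodule.mem_top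
  have hFsum (t : Fin 3 → ℝ) :
      F (∑ i, t i • ![x i, y i, 1]) = ∑ i, (t i * μ i) • ![xt i, yt i, 1] := by
    simp only [map_sum, map_smul, hF, smul_smul]
  rw [hsurj.forall]
  simp only [hFsum, circleForm_sum_smul hq0, circleForm_sum_smul hqt0]
  refine (forall_congr' fun t => ?_).trans ((forall_pairwise_products_eq_zero_iff
    (μ 0 * μ 1 * sqDist xt yt 0 1 - c₀ * sqDist x y 0 1)
    (μ 1 * μ 2 * sqDist xt yt 1 2 - c₀ * sqDist x y 1 2)
    (μ 2 * μ 0 * sqDist xt yt 2 0 - c₀ * sqDist x y 2 0)).trans ?_)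
  · constructor <;> intro h <;> linear_combination -h
  · simp only [sub_eq_zero]

theorem circumcircle_preserving_iff_weights
    (x y xt yt : Fin 3 → ℝ)
    (v vt : Fin 3 → (Fin 3 → ℝ))
    (hv : ∀ i, v i = ![x i, y i, 1]) (hvt : ∀ i, vt i = ![xt i, yt i, 1])
    (hli : LinearIndependent ℝ v)
    (ell ellt : Fin 3 → Fin 3 → ℝ)
    (hell : ∀ i j, ell i j = Real.sqrt ((x i - x j) ^ 2 + (y i - y j) ^ 2))
    (hellt : ∀ i j, ellt i j = Real.sqrt ((xt i - xt j) ^ 2 + (yt i - yt j) ^ 2))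
    (a b c a' b' c' : ℝ)
    (q qt : (Fin 3 → ℝ) → ℝ)
    (hq : ∀ w, q w = (w 0) ^ 2 + (w 1) ^ 2 + 2 * a * (w 0) * (w 2)
                      + 2 * b * (w 1) * (w 2) + c * (w 2) ^ 2)
    (hqt : ∀ w, qt w = (w 0) ^ 2 + (w 1) ^ 2 + 2 * a' * (w 0) * (w 2)
                      + 2 * b' * (w 1) * (w 2) + c' * (w 2) ^ 2)
    (hq0 : ∀ i, q (v i) = 0) (hqt0 : ∀ i, qt (vt i) = 0)
    (F : (Fin 3 → ℝ) →ₗ[ℝ] (Fin 3 → ℝ))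
    (μ : Fin 3 → ℝ)
    (hF : ∀ i, F (v i) = μ i • vt i)
    (u : Fin 3 → ℝ)
    (hu1 : Real.exp (u 0) = (ellt 0 1 * ell 1 2 * ellt 2 0) / (ell 0 1 * ellt 1 2 * ell 2 0))
    (hu2 : Real.exp (u 1) = (ellt 1 2 * ell 2 0 * ellt 0 1) / (ell 1 2 * ellt 2 0 * ell 0 1))
    (hu3 : Real.exp (u 2) = (ellt 2 0 * ell 0 1 * ellt 1 2) / (ell 2 0 * ellt 0 1 * ell 1 2)) :
    (∃ c0 : ℝ, c0 ≠ 0 ∧ ∀ w, qt (F w) = c0 * q w) ↔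
    (∃ m : ℝ, m ≠ 0 ∧ ∀ i, μ i = m * Real.exp (-(u i))) := by
  obtain rfl : v = fun i => ![x i, y i, 1] := funext hv
  obtain rfl : vt = fun i => ![xt i, yt i, 1] := funext hvt
  obtain rfl : q = circleForm a b c := funext hq
  obtain rfl : qt = circleForm a' b' c' := funext hqt
  have hsq (i j : Fin 3) : ell i j ^ 2 = sqDist x y i j := by
    rw [hell, Real.sq_sqrt (by positivity)]; rfl
  have hsqt (i j : Fin 3) : ellt i j ^ 2 = sqDist xt yt i j := by
    rw [hellt, Real.sq_sqrt (by positivity)]; rfl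
  have hu₀ : Real.exp (u 0) = scaleRatio ellt ell 0 1 2 := hu1
  have hu₁ : Real.exp (u 1) = scaleRatio ellt ell 1 2 0 := hu2
  have hu₂ : Real.exp (u 2) = scaleRatio ellt ell 2 0 1 := hu3
  have hne {i j k : Fin 3} (hi : Real.exp (u i) = scaleRatio ellt ell i j k) :
      scaleRatio ellt ell i j k ≠ 0 :=
    hi ▸ (Real.exp_pos _).ne'
  have hscale {i j k : Fin 3} (hi : Real.exp (u i) = scaleRatio ellt ell i j k)
      (hj : Real.exp (u j) = scaleRatio ellt ell j k i) :
      Real.exp (u i) * Real.exp (u j) * sqDist x y i j = sqDist xt yt i j := by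
    rw [hi, hj, ← hsq, ← hsqt]
    exact scaleRatio_mul_scaleRatio_mul_sq (hne hi)
  have hD {i j k : Fin 3} (hi : Real.exp (u i) = scaleRatio ellt ell i j k) :
      sqDist x y i j ≠ 0 :=
    hsq i j ▸ pow_ne_zero 2 (scaleRatio_ne_zero_iff.mp (hne hi)).2.1
  simp only [forall_circleForm_map_eq_iff hli hq0 hqt0 hF,
    mul_mul_eq_mul_iff_of_mul_mul_eq (hD hu₀) (hscale hu₀ hu₁),
    mul_mul_eq_mul_iff_of_mul_mul_eq (hD hu₁) (hscale hu₁ hu₂),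
    mul_mul_eq_mul_iff_of_mul_mul_eq (hD hu₂) (hscale hu₂ hu₀)]
  rw [exists_pairwise_products_eq_iff fun i => μ i * Real.exp (u i)]
  simp only [Real.exp_neg, ← div_eq_mul_inv, eq_div_iff (Real.exp_pos _).ne']
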